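/- Let κ and ν be real numbers with κ ≥ 0, ν ≥ 0 and κ + ν ≤ 1, and suppose q̂ ∈ [ν, 1] satisfies h(q̂) = q̂. Define the sequence (q_n)_{n≥0} by q₀ = 0, q₁ = ν, and q_{n+2} = f(q_{n+1}, q_n) for all n ≥ 0. Then (q_n) is nondecreasing and q_n ≤ q̂ for all n; consequently (q_n) converges to a limit q with q ≤ q̂. -/
import Mathlib


open Filter

/-- The fixed-point map governing extinction probabilities of the
delayed-branching BRW. -/
def h (κ ν q : ℝ) : ℝ :=
  ν + (1 - κ - ν) * q + κ * (1 - ν) ^ 2 * q ^ 3 + κ * ν ^ 2 * q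
    + 2 * κ * ν * (1 - ν) * q ^ 2

/-- The two-variable recursion map for the extinction probabilities,
so that `h κ ν q = f κ ν q q`. -/
def f (κ ν b a : ℝ) : ℝ :=
  ν + (1 - κ - ν) * b + κ * (1 - ν) ^ 2 * b * a ^ 2 + κ * ν ^ 2 * b
    + 2 * κ * ν * (1 - ν) * b * a

lemma f_mono (κ ν b a b' a' : ℝ) (hκ : 0 ≤ κ) (hν : 0 ≤ ν) (hκν : κ + ν ≤ 1)
    (ha0 : 0 ≤ a) (hb0 : 0 ≤ b) (hb : b ≤ b') (ha : a ≤ a') :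
    f κ ν b a ≤ f κ ν b' a' := by
  have hν1 : ν ≤ 1 := by linarith
  have h1 : 0 ≤ (1 - ν) := by linarith
  have e : f κ ν b' a' - f κ ν b a = (1-κ-ν)*(b'-b) + κ*ν^2*(b'-b)
      + κ*(1-ν)^2*((b'-b)*a'^2 + b*((a'+a)*(a'-a)))
      + 2*κ*ν*(1-ν)*((b'-b)*a' + b*(a'-a)) := by unfold f; ring
  have t1 : 0 ≤ (1-κ-ν)*(b'-b) := mul_nonneg (by linarith) (by linarith)
  have t2 : 0 ≤ κ*ν^2*(b'-b) := mul_nonneg (mul_nonneg hκ (sq_nonneg ν)) (by linarith)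
  have t3 : 0 ≤ κ*(1-ν)^2*((b'-b)*a'^2 + b*((a'+a)*(a'-a))) :=
    mul_nonneg (mul_nonneg hκ (sq_nonneg _))
      (add_nonneg (mul_nonneg (by linarith) (sq_nonneg _))
        (mul_nonneg hb0 (mul_nonneg (by linarith) (by linarith))))
  have t4 : 0 ≤ 2*κ*ν*(1-ν)*((b'-b)*a' + b*(a'-a)) :=
    mul_nonneg (mul_nonneg (mul_nonneg (by linarith) hν) h1)
      (add_nonneg (mul_nonneg (by linarith) (by linarith)) (mul_nonneg hb0 (by linarith)))
  linarith

theorem stmt_6 (κ ν qhat : ℝ) (hκ : 0 ≤ κ) (hν : 0 ≤ ν) (hκν : κ + ν ≤ 1)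
    (hqν : ν ≤ qhat) (hq1 : qhat ≤ 1) (hfix : h κ ν qhat = qhat)
    (q : ℕ → ℝ) (hq0 : q 0 = 0) (hq1' : q 1 = ν)
    (hrec : ∀ n : ℕ, q (n + 2) = f κ ν (q (n + 1)) (q n)) :
    Monotone q ∧ (∀ n, q n ≤ qhat) ∧
      ∃ l : ℝ, Tendsto q atTop (nhds l) ∧ l ≤ qhat := by
  have hqhat0 : 0 ≤ qhat := le_trans hν hqν
  have hfq : f κ ν qhat qhat = qhat := by
    rw [show f κ ν qhat qhat = h κ ν qhat from by unfold f h; ring, hfix]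
  -- P n : 0 ≤ q n ∧ q n ≤ q (n+1) ∧ q (n+1) ≤ qhat
  have key : ∀ n, (0 ≤ q n ∧ q n ≤ q (n+1) ∧ q (n+1) ≤ qhat) ∧
      (0 ≤ q (n+1) ∧ q (n+1) ≤ q (n+2) ∧ q (n+2) ≤ qhat) := by
    intro n
    induction n with
    | zero =>
      have h2 : q 2 = f κ ν ν 0 := by rw [hrec 0, hq1', hq0]
      have hν1 : ν ≤ 1 := by linarith
      have hq12 : q 1 ≤ q 2 := by
        rw [hq1', h2]; unfold f
        nlinarith [mul_nonneg hκ (mul_nonneg hν (mul_nonneg hν hν)),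
          mul_nonneg (show (0:ℝ) ≤ 1-κ-ν by linarith) hν]
      have hq2hat : q 2 ≤ qhat := by
        rw [← hfq, h2]
        exact f_mono κ ν ν 0 qhat qhat hκ hν hκν le_rfl hν hqν hqhat0
      refine ⟨⟨hq0.ge, ?_, by rw [hq1']; exact hqν⟩, ⟨by rw [hq1']; exact hν, hq12, hq2hat⟩⟩
      rw [hq0, hq1']; exact hν
    | succ m ih =>
      obtain ⟨⟨h0m, hm, hm1hat⟩, ⟨h0m1, hm1, hm2hat⟩⟩ := ih
      refine ⟨⟨h0m1, hm1, hm2hat⟩, ⟨le_trans h0m1 hm1, ?_, ?_⟩⟩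
      · rw [hrec m, hrec (m+1)]
        exact f_mono κ ν (q (m+1)) (q m) (q (m+2)) (q (m+1)) hκ hν hκν h0m h0m1 hm1 hm
      · rw [← hfq, hrec (m+1)]
        exact f_mono κ ν (q (m+2)) (q (m+1)) qhat qhat hκ hν hκν h0m1
          (le_trans h0m1 hm1) hm2hat hm1hat
  have hmono : Monotone q := monotone_nat_of_le_succ fun n => (key n).1.2.1
  have hbd : ∀ n, q n ≤ qhat := by
    intro n
    cases n with
    | zero => rw [hq0]; exact hqhat0
    | succ m => exact (key m).1.2.2
  refine ⟨hmono, hbd, ⨆ n, q n, ?_, ciSup_le hbd⟩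
  exact tendsto_atTop_ciSup hmono ⟨qhat, fun x ⟨n, hn⟩ => hn ▸ hbd n⟩
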